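/- arXiv:1411.6259 — 3 statements merged into one kernel-verified Lean document; each statement's English description precedes it below -/
import Mathlib

section
/- Let r, s, m, n be integers such that m divides 2·r·s, gcd(gcd(r, s), m) = 1, and r and s are not both odd. Then gcd(n·r·s + r − s, m) = 1, and consequently gcd(n·(n·r·s + r − s), m) = gcd(n, m). -/
/-!
A prime `p` dividing both `m` and `k = n r s + r - s` divides `2 r s`; since one of `r`, `s` is even,
`p` divides `r` or `s`. Modulo `p` we have `k ≡ r - s` as soon as `p ∣ r s`, so `p` then divides
both `r` and `s`, contradicting `gcd(gcd(r, s), m) = 1`. Hence `k` is coprime to `m`, and multiplying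
by `k` does not change the gcd with `m`.
-/

lemma dvd_iff_dvd_of_dvd_mul_mul_add_sub {R : Type*} [CommRing R] {p r s : R} (n : R)
    (h : p ∣ n * r * s + r - s) : p ∣ r ↔ p ∣ s := by
  constructor
  · intro hr
    have hs := dvd_sub (dvd_add ((hr.mul_left n).mul_right s) hr) h
    rwa [show n * r * s + r - (n * r * s + r - s) = s by ring] at hs
  · intro hs
    have hr := dvd_add (dvd_sub h (hs.mul_left (n * r))) hs
    rwa [show n * r * s + r - s - n * r * s + s = r by ring] at hr

lemma Prime.dvd_or_dvd_of_dvd_two_mul_of_even {R : Type*} [CommSemiring R] {p r s : R}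
    (hp : Prime p) (h : p ∣ 2 * (r * s)) (heven : Even r ∨ Even s) : p ∣ r ∨ p ∣ s := by
  rcases hp.dvd_or_dvd h with h2 | hrs
  · exact heven.imp (fun hr => h2.trans hr.two_dvd) (fun hs => h2.trans hs.two_dvd)
  · exact hp.dvd_or_dvd hrs

lemma Int.gcd_mul_mul_add_sub_eq_one {r s m : ℤ} (n : ℤ) (hdvd : m ∣ 2 * (r * s))
    (hgcd : Int.gcd (Int.gcd r s : ℤ) m = 1) (hpar : ¬ (Odd r ∧ Odd s)) :
    Int.gcd (n * r * s + r - s) m = 1 := by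
  refine Nat.coprime_of_dvd' fun p hp hpk hpm => ?_
  rw [← Int.natCast_dvd] at hpk hpm
  have heven : Even r ∨ Even s :=
    (not_and_or.mp hpar).imp Int.not_odd_iff_even.mp Int.not_odd_iff_even.mp
  have hpr_or_hps := (Nat.prime_iff_prime_int.mp hp).dvd_or_dvd_of_dvd_two_mul_of_even
    (hpm.trans hdvd) heven
  have hiff := dvd_iff_dvd_of_dvd_mul_mul_add_sub n hpk
  have hpr : (p : ℤ) ∣ r := hpr_or_hps.elim id hiff.mpr
  have hp_gcd := Int.dvd_coe_gcd (Int.dvd_coe_gcd hpr (hiff.mp hpr)) hpm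
  rwa [hgcd, Int.natCast_dvd_natCast] at hp_gcd

lemma Int.gcd_mul_right_cancel_of_gcd_eq_one {k m : ℤ} (n : ℤ) (h : Int.gcd k m = 1) :
    Int.gcd (n * k) m = Int.gcd n m := by
  rw [Int.gcd, Int.natAbs_mul]
  exact Nat.Coprime.gcd_mul_right_cancel _ h

/-- If m ∣ 2rs, gcd(gcd(r,s), m) = 1 and r, s are not both odd, then
gcd(nrs + r − s, m) = 1 and gcd(n·(nrs + r − s), m) = gcd(n, m). -/
theorem stmt_2 (r s m n : ℤ) (hdvd : m ∣ 2 * (r * s))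
    (hgcd : Int.gcd (Int.gcd r s : ℤ) m = 1) (hpar : ¬ (Odd r ∧ Odd s)) :
    Int.gcd (n * r * s + r - s) m = 1 ∧
      Int.gcd (n * (n * r * s + r - s)) m = Int.gcd n m := by
  have hcop := Int.gcd_mul_mul_add_sub_eq_one n hdvd hgcd hpar
  exact ⟨hcop, Int.gcd_mul_right_cancel_of_gcd_eq_one n hcop⟩
end

section
/- For all integers x and y, 8·x² + 30·x·y + 10·y² ≠ −2. -/
/-!
Halving, `4x² + 15xy + 5y² = -1`; reducing mod 2 forces `x = 2a` to be even, and then the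
equation becomes `29a² - 5b² = 1` with `b = 3a + y`. This equation has no local obstruction,
so it is refuted by descent: multiplication by the norm-one unit `289 - 24√145` of `ℤ[√145]`
preserves `29a² - 5b²` and strictly decreases `|a|` once `|a| ≥ 3`, while `|a| ≤ 2` is checked
by hand.
-/

lemma descent_preserves_form (a b : ℤ) :
    29 * (289 * a - 120 * b) ^ 2 - 5 * (289 * b - 696 * a) ^ 2 = 29 * a ^ 2 - 5 * b ^ 2 := by
  ring

lemma descent_pos_lt {a b : ℤ} (hb : 0 ≤ b) (ha : 3 ≤ a) (h : 29 * a ^ 2 - 5 * b ^ 2 = 1) :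
    0 < 289 * a - 120 * b ∧ 289 * a - 120 * b < a := by
  constructor <;> nlinarith

theorem twentynine_sq_sub_five_sq_ne_one (a b : ℤ) : 29 * a ^ 2 - 5 * b ^ 2 ≠ 1 := by
  induction hn : a.natAbs using Nat.strong_induction_on generalizing a b with
  | _ n ih =>
    intro h
    have habs : 29 * |a| ^ 2 - 5 * |b| ^ 2 = 1 := by simpa only [sq_abs] using h
    have ha : 0 ≤ |a| := abs_nonneg a
    have hb : 0 ≤ |b| := abs_nonneg b
    rcases le_or_gt |a| 2 with hsmall | hlarge
    · have hb4 : |b| ≤ 4 := by nlinarith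
      interval_cases |a| <;> interval_cases |b| <;> norm_num at habs
    · obtain ⟨hpos, hlt⟩ := descent_pos_lt hb hlarge habs
      refine ih _ ?_ _ (289 * |b| - 696 * |a|) rfl ((descent_preserves_form _ _).trans habs)
      rw [← hn, ← Int.natAbs_abs a]
      exact Int.natAbs_lt_natAbs_of_nonneg_of_lt hpos.le hlt

lemma even_of_form_eq_neg_one {x y : ℤ} (h : 4 * x ^ 2 + 15 * x * y + 5 * y ^ 2 = -1) :
    Even x := by
  have hmod := congrArg (Int.cast : ℤ → ZMod 2) h
  push_cast at hmod
  rw [← ZMod.intCast_eq_zero_iff_even]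
  generalize (x : ZMod 2) = u at hmod ⊢
  generalize (y : ZMod 2) = v at hmod
  revert u v
  decide

/-- The quadratic form 8x² + 30xy + 10y² does not represent −2 over ℤ. -/
theorem stmt_7 : ∀ x y : ℤ, 8 * x ^ 2 + 30 * x * y + 10 * y ^ 2 ≠ -2 := by
  intro x y h
  obtain ⟨a, rfl⟩ := even_of_form_eq_neg_one (x := x) (y := y) (by linarith)
  exact twentynine_sq_sub_five_sq_ne_one a (3 * a + y) (by linarith)
end

section
/- Let A be the 2×2 integer matrix [[2, 13], [13, 12]] and B the 2×2 integer matrix [[8, 15], [15, 10]]. Then det A = det B = −145, but there is no 2×2 integer matrix P with det P = ±1 (i.e., P invertible over ℤ) such that Pᵀ·A·P = B. In other words, the two even rank-two lattices with these Gram matrices have equal discriminant but are not isomorphic over ℤ. -/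
/-!
A congruence `Pᵀ A P = B` with `P ∈ GL₂(ℤ)` transports every value of the quadratic form of `A`
to one of `B`. The form of `A` takes the value `-2` at `(-1, 2)`, while the form of `B` is
`2 q` with `q(x, y) = 4x² + 15xy + 5y²` of discriminant `145`, and `q` does not take the value
`-1`. For the latter, `q` has the integral automorph of determinant one coming from
`(12 + √145)² = 289 + 24√145`; from a solution of `q = -1` with `|y|` minimal, the automorph and
its inverse produce solutions whose `y`-coordinates `y', y''` satisfy `y' + y'' = 578 y` and
`y' y'' = y² + 9216`, which forces `|y| ≤ 4`; and there are no solutions with `|y| ≤ 4`.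
-/

namespace Matrix

variable {n R : Type*} [Fintype n] [DecidableEq n] [CommRing R]

theorem exists_dotProduct_mulVec_eq_of_transpose_mul_mul_eq {A B P : Matrix n n R}
    (hP : Pᵀ * A * P = B) (hdet : IsUnit P.det) (v : n → R) :
    ∃ w : n → R, w ⬝ᵥ (B *ᵥ w) = v ⬝ᵥ (A *ᵥ v) := by
  refine ⟨P⁻¹ *ᵥ v, ?_⟩
  have hPv : P *ᵥ (P⁻¹ *ᵥ v) = v := by rw [mulVec_mulVec, mul_nonsing_inv P hdet, one_mulVec]
  rw [← hP, ← mulVec_mulVec, ← mulVec_mulVec, dotProduct_mulVec, vecMul_transpose, hPv]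

end Matrix

open Matrix

def gramA : Matrix (Fin 2) (Fin 2) ℤ := !![2, 13; 13, 12]

def gramB : Matrix (Fin 2) (Fin 2) ℤ := !![8, 15; 15, 10]

def halfFormB (x y : ℤ) : ℤ := 4 * x ^ 2 + 15 * x * y + 5 * y ^ 2

theorem dotProduct_gramA_mulVec : ![-1, 2] ⬝ᵥ (gramA *ᵥ ![-1, 2]) = -2 := by
  decide

theorem dotProduct_gramB_mulVec (v : Fin 2 → ℤ) :
    v ⬝ᵥ (gramB *ᵥ v) = 2 * halfFormB (v 0) (v 1) := by
  simp [gramB, halfFormB, mulVec, dotProduct, Fin.sum_univ_two]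
  ring

theorem halfFormB_automorph (x y : ℤ) :
    halfFormB (649 * x + 240 * y) (-192 * x - 71 * y) = halfFormB x y := by
  unfold halfFormB; ring

theorem halfFormB_automorph_inv (x y : ℤ) :
    halfFormB (-71 * x - 240 * y) (192 * x + 649 * y) = halfFormB x y := by
  unfold halfFormB; ring

theorem halfFormB_ne_neg_one_of_abs_le_four {x y : ℤ} (hy : |y| ≤ 4) : halfFormB x y ≠ -1 := by
  intro h
  have hu : (8 * x + 15 * y) ^ 2 = 145 * y ^ 2 - 16 := by
    unfold halfFormB at h; linear_combination 16 * h
  obtain ⟨hy₁, hy₂⟩ := abs_le.1 hy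
  obtain ⟨hu₁, hu₂⟩ :=
    abs_le_of_sq_le_sq' (show (8 * x + 15 * y) ^ 2 ≤ 48 ^ 2 by nlinarith) (by norm_num)
  have hx₁ : -14 ≤ x := by omega
  have hx₂ : x ≤ 14 := by omega
  unfold halfFormB at h
  interval_cases y <;> interval_cases x <;> omega

theorem abs_le_four_of_le_abs_automorph {x y : ℤ} (h : halfFormB x y = -1)
    (h₁ : |y| ≤ |-192 * x - 71 * y|) (h₂ : |y| ≤ |192 * x + 649 * y|) : |y| ≤ 4 := by
  unfold halfFormB at h
  have hprod : |-192 * x - 71 * y| * |192 * x + 649 * y| = y ^ 2 + 9216 := by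
    rw [← abs_mul, abs_of_nonneg (by nlinarith [sq_nonneg y])]
    linear_combination -9216 * h
  have hsum : 578 * |y| ≤ |-192 * x - 71 * y| + |192 * x + 649 * y| :=
    calc 578 * |y| = |(-192 * x - 71 * y) + (192 * x + 649 * y)| := by
          rw [show (-192 * x - 71 * y) + (192 * x + 649 * y) = 578 * y by ring, abs_mul]
          norm_num
      _ ≤ _ := abs_add_le _ _
  nlinarith [mul_nonneg (sub_nonneg.2 h₁) (sub_nonneg.2 h₂), sq_abs y, abs_nonneg y]

theorem halfFormB_ne_neg_one (x y : ℤ) : halfFormB x y ≠ -1 := by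
  induction hn : y.natAbs using Nat.strong_induction_on generalizing x y with
  | _ n ih =>
  intro h
  refine halfFormB_ne_neg_one_of_abs_le_four (abs_le_four_of_le_abs_automorph h ?_ ?_) h
  · by_contra! hlt
    exact ih _ (by rw [← hn]; zify; exact hlt) _ _ rfl ((halfFormB_automorph x y).trans h)
  · by_contra! hlt
    exact ih _ (by rw [← hn]; zify; exact hlt) _ _ rfl ((halfFormB_automorph_inv x y).trans h)

theorem dotProduct_gramB_mulVec_ne_neg_two (v : Fin 2 → ℤ) : v ⬝ᵥ (gramB *ᵥ v) ≠ -2 := by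
  rw [dotProduct_gramB_mulVec]
  intro hv
  exact halfFormB_ne_neg_one (v 0) (v 1) (by omega)

/-- The Gram matrices A = [[2,13],[13,12]] and B = [[8,15],[15,10]] both have
determinant −145, but are not congruent by any matrix P ∈ GL₂(ℤ):
the corresponding even rank-two lattices have equal discriminant but are not
isomorphic over ℤ. -/
theorem stmt_8 :
    (!![2, 13; 13, 12] : Matrix (Fin 2) (Fin 2) ℤ).det = -145 ∧
    (!![8, 15; 15, 10] : Matrix (Fin 2) (Fin 2) ℤ).det = -145 ∧
    ¬ ∃ P : Matrix (Fin 2) (Fin 2) ℤ, (P.det = 1 ∨ P.det = -1) ∧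
      P.transpose * !![2, 13; 13, 12] * P = !![8, 15; 15, 10] := by
  refine ⟨by simp [det_fin_two_of], by simp [det_fin_two_of], ?_⟩
  rintro ⟨P, hdet, hP⟩
  obtain ⟨w, hw⟩ :=
    exists_dotProduct_mulVec_eq_of_transpose_mul_mul_eq hP (Int.isUnit_iff.2 hdet) ![-1, 2]
  exact dotProduct_gramB_mulVec_ne_neg_two w (hw.trans dotProduct_gramA_mulVec)
end
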